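/- Let ξ ∈ S^{d-1} and let K(ξ) := { a ⊙ ξ := (1/2)(a ⊗ ξ + ξ ⊗ a) : a ∈ C^d } ⊂ C^{d×d}_sym be the set of symmetric tensor products with ξ. If M ∈ R^{d×d}_sym cannot be written as c(a ⊙ b) for any a, b ∈ R^d and c ∈ R, then span_C{M} ∩ K(ξ) = {0} for all ξ ∈ S^{d-1}. If M = c(a ⊙ b) with a, b ∈ S^{d-1} and c ≠ 0, then span_C{M} ∩ K(ξ) ≠ {0} if and only if ξ = ±a or ξ = ±b. -/

import Mathlib

/-!
Contracting `w ⊙ ξ = a ⊙ b` twice with `ξ`, where `ξ ⬝ᵥ ξ = 1` (the bilinear pairing, so this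
works verbatim over `ℂ`), gives `w ⬝ᵥ ξ = (a ⬝ᵥ ξ)(b ⬝ᵥ ξ)` and then
`w = (b ⬝ᵥ ξ) a + (a ⬝ᵥ ξ) b - (a ⬝ᵥ ξ)(b ⬝ᵥ ξ) ξ`; substituting back,
`(a - (a ⬝ᵥ ξ) ξ) ⊙ (b - (b ⬝ᵥ ξ) ξ) = 0`. As `u ⊙ v = 0` forces `u = 0` or `v = 0`, `a ⊙ b` lies in
`K(ξ)` exactly when `a` or `b` is parallel to `ξ`, i.e. `ξ = ±a` or `ξ = ±b` for unit vectors.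
Since `K(ξ)` is a subspace, `span_ℂ{M}` meets it nontrivially iff `M ∈ K(ξ)`; for real `M`,
taking real parts turns `M = w ⊙ ξ` into `M = (Re w) ⊙ ξ`.
-/

/-- Symmetric tensor product `a ⊙ b = (1/2)(a bᵀ + b aᵀ)`. -/
noncomputable def symProd {d : ℕ} {R : Type*} [Field R] (a b : Fin d → R) :
    Matrix (Fin d) (Fin d) R :=
  Matrix.of fun i j => (a i * b j + b i * a j) / 2

open Matrix

theorem Submodule.exists_mem_span_singleton_ne_zero_mem_iff {K V : Type*} [DivisionRing K]
    [AddCommGroup V] [Module K V] {p : Submodule K V} {x : V} (hx : x ≠ 0) :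
    (∃ z ∈ K ∙ x, z ≠ 0 ∧ z ∈ p) ↔ x ∈ p := by
  rw [← not_iff_not, ← disjoint_span_singleton' hx, disjoint_def]
  grind

theorem mem_span_singleton_iff_eq_or_eq_neg {E : Type*} [NormedAddCommGroup E] [NormedSpace ℝ E]
    {x y : E} (hx : ‖x‖ = 1) (hy : ‖y‖ = 1) : x ∈ ℝ ∙ y ↔ y = x ∨ y = -x := by
  constructor
  · intro h
    obtain ⟨t, rfl⟩ := Submodule.mem_span_singleton.mp h
    rw [norm_smul, hy, mul_one, Real.norm_eq_abs] at hx
    rcases abs_eq zero_le_one |>.mp hx with rfl | rfl <;> simp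
  · rintro (rfl | rfl)
    · exact Submodule.mem_span_singleton_self y
    · exact Submodule.mem_span_singleton.mpr ⟨-1, by simp⟩

section Field

variable {d : ℕ} {R : Type*} [Field R]

theorem symProd_comm (a b : Fin d → R) : symProd a b = symProd b a := by
  ext i j
  simp only [symProd, of_apply]
  ring

theorem smul_symProd (c : R) (a b : Fin d → R) : symProd (c • a) b = c • symProd a b := by
  ext i j
  simp only [symProd, of_apply, Pi.smul_apply, Matrix.smul_apply, smul_eq_mul]
  ring

theorem symProd_add (a b ξ : Fin d → R) : symProd (a + b) ξ = symProd a ξ + symProd b ξ := by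
  ext i j
  simp only [symProd, of_apply, Pi.add_apply, Matrix.add_apply]
  ring

theorem symProd_mulVec (a b ξ : Fin d → R) :
    symProd a b *ᵥ ξ = (2 : R)⁻¹ • ((b ⬝ᵥ ξ) • a + (a ⬝ᵥ ξ) • b) := by
  ext i
  simp only [symProd, mulVec, dotProduct, of_apply, Pi.smul_apply, Pi.add_apply, smul_eq_mul,
    Finset.sum_mul, Finset.mul_sum, ← Finset.sum_add_distrib]
  exact Finset.sum_congr rfl fun j _ => by ring

theorem symProd_eq_zero_iff [NeZero (2 : R)] {a b : Fin d → R} :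
    symProd a b = 0 ↔ a = 0 ∨ b = 0 := by
  refine ⟨fun h => ?_, by rintro (rfl | rfl) <;> ext <;> simp [symProd]⟩
  by_contra! hab
  obtain ⟨i, hi⟩ : ∃ i, a i ≠ 0 := Function.ne_iff.mp hab.1
  obtain ⟨j, hj⟩ : ∃ j, b j ≠ 0 := Function.ne_iff.mp hab.2
  have hentry (k l : Fin d) : a k * b l + b k * a l = 0 := by
    simpa [symProd, two_ne_zero] using congrFun (congrFun h k) l
  have hbi : b i = 0 := by
    have : (2 : R) * a i * b i = 0 := by linear_combination hentry i i
    simpa [hi, two_ne_zero] using this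
  exact hj (by simpa [hbi, hi] using hentry i j)

theorem eq_smul_or_eq_smul_of_symProd_eq [NeZero (2 : R)] {w ξ a b : Fin d → R}
    (hξ : ξ ⬝ᵥ ξ = 1) (h : symProd w ξ = symProd a b) :
    a = (a ⬝ᵥ ξ) • ξ ∨ b = (b ⬝ᵥ ξ) • ξ := by
  have hv : w + (w ⬝ᵥ ξ) • ξ = (b ⬝ᵥ ξ) • a + (a ⬝ᵥ ξ) • b := by
    have := congrArg (fun v => (2 : R) • (v *ᵥ ξ)) h
    simpa [symProd_mulVec, hξ, smul_smul, two_ne_zero] using this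
  have hγ : w ⬝ᵥ ξ = (a ⬝ᵥ ξ) * (b ⬝ᵥ ξ) := by
    have := congrArg (· ⬝ᵥ ξ) hv
    simp only [add_dotProduct, smul_dotProduct, hξ, smul_eq_mul] at this
    exact mul_left_cancel₀ two_ne_zero (by linear_combination this)
  have hw : w = (b ⬝ᵥ ξ) • a + (a ⬝ᵥ ξ) • b - ((a ⬝ᵥ ξ) * (b ⬝ᵥ ξ)) • ξ := by
    rw [← hγ, ← hv, add_sub_cancel_right]
  have hsplit : symProd (a - (a ⬝ᵥ ξ) • ξ) (b - (b ⬝ᵥ ξ) • ξ) = symProd a b -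
      symProd ((b ⬝ᵥ ξ) • a + (a ⬝ᵥ ξ) • b - ((a ⬝ᵥ ξ) * (b ⬝ᵥ ξ)) • ξ) ξ := by
    ext i j
    simp only [symProd, of_apply, Matrix.sub_apply, Pi.sub_apply, Pi.add_apply, Pi.smul_apply,
      smul_eq_mul]
    ring
  rw [← hw, h, sub_self, symProd_eq_zero_iff] at hsplit
  simpa only [sub_eq_zero] using hsplit

/-- The range of this map is the set `K(ξ)`. -/
noncomputable def symProdWith (ξ : Fin d → R) : (Fin d → R) →ₗ[R] Matrix (Fin d) (Fin d) R where
  toFun w := symProd w ξ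
  map_add' a b := symProd_add a b ξ
  map_smul' c a := smul_symProd c a ξ

theorem mem_range_symProdWith {ξ : Fin d → R} {z : Matrix (Fin d) (Fin d) R} :
    z ∈ LinearMap.range (symProdWith ξ) ↔ ∃ w, z = symProd w ξ := by
  simp only [LinearMap.mem_range, symProdWith, LinearMap.coe_mk, AddHom.coe_mk, eq_comm]

theorem symProd_mem_range_symProdWith_iff [NeZero (2 : R)] {ξ a b : Fin d → R}
    (hξ : ξ ⬝ᵥ ξ = 1) :
    symProd a b ∈ LinearMap.range (symProdWith ξ) ↔ a ∈ R ∙ ξ ∨ b ∈ R ∙ ξ := by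
  simp only [mem_range_symProdWith, Submodule.mem_span_singleton]
  constructor
  · rintro ⟨w, hw⟩
    exact (eq_smul_or_eq_smul_of_symProd_eq hξ hw.symm).imp (fun h => ⟨_, h.symm⟩)
      fun h => ⟨_, h.symm⟩
  · rintro (⟨t, rfl⟩ | ⟨t, rfl⟩)
    · exact ⟨t • b, by rw [smul_symProd, smul_symProd, symProd_comm]⟩
    · exact ⟨t • a, by rw [symProd_comm a, smul_symProd, smul_symProd, symProd_comm ξ]⟩

end Field

section Real

variable {d : ℕ}

theorem EuclideanSpace.dotProduct_ofLp_self {ι : Type*} [Fintype ι] (x : EuclideanSpace ℝ ι) :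
    WithLp.ofLp x ⬝ᵥ WithLp.ofLp x = ‖x‖ ^ 2 := by
  rw [← real_inner_self_eq_norm_sq, EuclideanSpace.inner_eq_star_dotProduct, star_trivial]

theorem ofReal_comp_mem_span_singleton_iff {ι : Type*} {a ξ : EuclideanSpace ℝ ι} :
    (fun i => (a i : ℂ)) ∈ ℂ ∙ (fun i => (ξ i : ℂ)) ↔ a ∈ ℝ ∙ ξ := by
  simp only [Submodule.mem_span_singleton]
  constructor
  · rintro ⟨μ, hμ⟩
    refine ⟨μ.re, ?_⟩
    ext i
    simpa using congrArg Complex.re (congrFun hμ i)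
  · rintro ⟨t, rfl⟩
    exact ⟨t, by ext i; simp⟩

theorem symProd_ofReal_mem_range_symProdWith_iff {a b ξ : EuclideanSpace ℝ (Fin d)}
    (ha : ‖a‖ = 1) (hb : ‖b‖ = 1) (hξ : ‖ξ‖ = 1) :
    symProd (fun i => (a i : ℂ)) (fun i => (b i : ℂ)) ∈
        LinearMap.range (symProdWith fun i => (ξ i : ℂ)) ↔
      ξ = a ∨ ξ = -a ∨ ξ = b ∨ ξ = -b := by
  have hξC : (fun i => (ξ i : ℂ)) ⬝ᵥ (fun i => (ξ i : ℂ)) = 1 := by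
    have := congrArg Complex.ofRealHom ξ.dotProduct_ofLp_self
    rwa [RingHom.map_dotProduct, hξ, one_pow, map_one] at this
  rw [symProd_mem_range_symProdWith_iff hξC, ofReal_comp_mem_span_singleton_iff,
    ofReal_comp_mem_span_singleton_iff, mem_span_singleton_iff_eq_or_eq_neg ha hξ,
    mem_span_singleton_iff_eq_or_eq_neg hb hξ, or_assoc]

theorem eq_symProd_re_of_map_ofReal_eq {M : Matrix (Fin d) (Fin d) ℝ} {w : Fin d → ℂ}
    {ξ : Fin d → ℝ} (h : (Matrix.of fun i j => (M i j : ℂ)) = symProd w fun i => (ξ i : ℂ)) :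
    M = symProd (fun i => (w i).re) ξ := by
  ext i j
  simpa [symProd] using congrArg Complex.re (congrFun (congrFun h i) j)

theorem symProd_ofReal_ne_zero {a b : EuclideanSpace ℝ (Fin d)} (ha : a ≠ 0) (hb : b ≠ 0) :
    symProd (fun i => (a i : ℂ)) (fun i => (b i : ℂ)) ≠ 0 := by
  have ofReal_comp_ne_zero {x : EuclideanSpace ℝ (Fin d)} (hx : x ≠ 0) : (fun i => (x i : ℂ)) ≠ 0 :=
    fun h => hx (by ext i; simpa using congrFun h i)
  rw [Ne, symProd_eq_zero_iff, not_or]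
  exact ⟨ofReal_comp_ne_zero ha, ofReal_comp_ne_zero hb⟩

end Real

theorem stmt13_general {d : ℕ} (M : Matrix (Fin d) (Fin d) ℝ) :
    ((¬ ∃ (a b : Fin d → ℝ) (c : ℝ), M = c • symProd a b) →
      ∀ ξ : EuclideanSpace ℝ (Fin d), ‖ξ‖ = 1 →
        ∀ z ∈ Submodule.span ℂ {Matrix.of fun i j => ((M i j : ℂ))},
          (∃ w : Fin d → ℂ, z = symProd w (fun i => (ξ i : ℂ))) → z = 0) ∧
    (∀ (a b : EuclideanSpace ℝ (Fin d)) (c : ℝ), ‖a‖ = 1 → ‖b‖ = 1 → c ≠ 0 →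
      M = c • symProd (fun i => a i) (fun i => b i) →
      ∀ ξ : EuclideanSpace ℝ (Fin d), ‖ξ‖ = 1 →
        ((∃ z ∈ Submodule.span ℂ {Matrix.of fun i j => ((M i j : ℂ))},
            z ≠ 0 ∧ ∃ w : Fin d → ℂ, z = symProd w (fun i => (ξ i : ℂ))) ↔
          (ξ = a ∨ ξ = -a ∨ ξ = b ∨ ξ = -b))) := by
  simp_rw [← mem_range_symProdWith]
  refine ⟨fun hM ξ _ z hz hzK => ?_, fun a b c ha hb hc hMab ξ hξ => ?_⟩
  · have hMK : (Matrix.of fun i j => (M i j : ℂ)) ∉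
        LinearMap.range (symProdWith fun i => (ξ i : ℂ)) := fun hMK => by
      obtain ⟨w, hw⟩ := mem_range_symProdWith.mp hMK
      exact hM ⟨_, _, 1, by rw [one_smul]; exact eq_symProd_re_of_map_ofReal_eq hw⟩
    exact Submodule.disjoint_def.mp (Submodule.disjoint_span_singleton_of_notMem hMK) z hzK hz
  · have hMC : (Matrix.of fun i j => (M i j : ℂ)) =
        (c : ℂ) • symProd (fun i => (a i : ℂ)) (fun i => (b i : ℂ)) := by
      ext i j
      simp [hMab, symProd]
    have hMC0 : (Matrix.of fun i j => (M i j : ℂ)) ≠ 0 := by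
      rw [hMC]
      exact smul_ne_zero (Complex.ofReal_ne_zero.mpr hc)
        (symProd_ofReal_ne_zero (norm_ne_zero_iff.mp (ha ▸ one_ne_zero))
          (norm_ne_zero_iff.mp (hb ▸ one_ne_zero)))
    rw [Submodule.exists_mem_span_singleton_ne_zero_mem_iff hMC0, hMC,
      Submodule.smul_mem_iff _ (Complex.ofReal_ne_zero.mpr hc),
      symProd_ofReal_mem_range_symProdWith_iff ha hb hξ]

/-- Rigidity for linear elasticity: the kernel of the symmetric-gradient symbol at `ξ`
is `{a ⊙ ξ}`; if a symmetric `M` is not of the form `c(a ⊙ b)`, then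
`span_ℂ{M} ∩ K(ξ) = {0}` for all unit `ξ`; if `M = c(a ⊙ b)` with unit `a, b` and
`c ≠ 0`, then `span_ℂ{M} ∩ K(ξ) ≠ {0}` iff `ξ = ±a` or `ξ = ±b`. -/
theorem stmt13 {d : ℕ} (M : Matrix (Fin d) (Fin d) ℝ) (hM : M.IsSymm) :
    ((¬ ∃ (a b : Fin d → ℝ) (c : ℝ), M = c • symProd a b) →
      ∀ ξ : EuclideanSpace ℝ (Fin d), ‖ξ‖ = 1 →
        ∀ z ∈ Submodule.span ℂ {Matrix.of fun i j => ((M i j : ℂ))},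
          (∃ w : Fin d → ℂ, z = symProd w (fun i => (ξ i : ℂ))) → z = 0) ∧
    (∀ (a b : EuclideanSpace ℝ (Fin d)) (c : ℝ), ‖a‖ = 1 → ‖b‖ = 1 → c ≠ 0 →
      M = c • symProd (fun i => a i) (fun i => b i) →
      ∀ ξ : EuclideanSpace ℝ (Fin d), ‖ξ‖ = 1 →
        ((∃ z ∈ Submodule.span ℂ {Matrix.of fun i j => ((M i j : ℂ))},
            z ≠ 0 ∧ ∃ w : Fin d → ℂ, z = symProd w (fun i => (ξ i : ℂ))) ↔
          (ξ = a ∨ ξ = -a ∨ ξ = b ∨ ξ = -b))) :=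
  stmt13_general M
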